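/- With R = ℤ/pℤ[t,t⁻¹] (p > 1) and B = [[-t⁻¹,1,0],[0,1,0],[0,1,-t]]: if v ∈ R³ has all coordinates nonzero of equal lowest degree n (v ∈ X₂), then w = Bv satisfies ord(w₀) = n-1, ord(w₁) = n, and ord(w₂) = n; hence applying B once more, B²v lies in X₁ (first coordinate's lowest degree is n-2, at least 2 below the others). -/

import Mathlib

open LaurentPolynomial

/-! Multiplying by `T k` shifts the lowest degree by `k`, and adding a term of strictly higher
order does not change it. The first row of `B` is `-T⁻¹ v₀ + v₁`, whose order drops by one, the
second row is `v₁`, and the third row is `v₁ - T v₂`, whose order is that of `v₁`. Applied to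
`v ∈ X₂` this gives orders `(n - 1, n, n)`, and applying the first row once more gives `n - 2`. -/

/-- lowest degree of `f` is at least `n` (ord 0 = +∞). -/
def ordGE {R : Type*} [CommRing R] (f : LaurentPolynomial R) (n : ℤ) : Prop :=
  ∀ m : ℤ, m < n → f.coeff m = 0

/-- lowest degree of `f` is exactly `n`. -/
def ordEq {R : Type*} [CommRing R] (f : LaurentPolynomial R) (n : ℤ) : Prop :=
  f.coeff n ≠ 0 ∧ ordGE f n

noncomputable def Bm (p : ℕ) : Matrix (Fin 3) (Fin 3) (LaurentPolynomial (ZMod p)) :=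
  !![-T (-1), 1, 0;
     0, 1, 0;
     0, 1, -T 1]

theorem LaurentPolynomial.coeff_T_mul {R : Type*} [Semiring R] (k : ℤ) (f : R[T;T⁻¹])
    (m : ℤ) : (T k * f).coeff m = f.coeff (m - k) := by
  rw [T, AddMonoidAlgebra.coeff_single_mul_apply, one_mul, neg_add_eq_sub]

section Order

variable {R : Type*} [CommRing R] {f g : R[T;T⁻¹]} {m n : ℤ}

theorem ordGE.mono (hf : ordGE f n) (hmn : m ≤ n) : ordGE f m :=
  fun k hk => hf k (hk.trans_le hmn)

theorem ordGE.add (hf : ordGE f n) (hg : ordGE g n) : ordGE (f + g) n := fun k hk => by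
  rw [AddMonoidAlgebra.coeff_add, Finsupp.add_apply, hf k hk, hg k hk, add_zero]

theorem ordGE.neg (hf : ordGE f n) : ordGE (-f) n := fun k hk => by
  rw [AddMonoidAlgebra.coeff_neg, Finsupp.neg_apply, hf k hk, neg_zero]

theorem ordGE.T_mul (hf : ordGE f n) (k : ℤ) : ordGE (T k * f) (n + k) := fun j hj => by
  rw [coeff_T_mul, hf _ (by omega)]

theorem ordEq.neg (hf : ordEq f n) : ordEq (-f) n :=
  ⟨by rw [AddMonoidAlgebra.coeff_neg, Finsupp.neg_apply, neg_ne_zero]; exact hf.1, hf.2.neg⟩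

theorem ordEq.T_mul (hf : ordEq f n) (k : ℤ) : ordEq (T k * f) (n + k) :=
  ⟨by rw [coeff_T_mul, add_sub_cancel_right]; exact hf.1, hf.2.T_mul k⟩

theorem ordEq.add_of_ordGE (hf : ordEq f n) (hg : ordGE g (n + 1)) : ordEq (f + g) n :=
  ⟨by rw [AddMonoidAlgebra.coeff_add, Finsupp.add_apply, hg n (by omega), add_zero]; exact hf.1,
    hf.2.add (hg.mono (by omega))⟩

end Order

section Bm

variable {p : ℕ} (v : Fin 3 → LaurentPolynomial (ZMod p)) {n : ℤ}

theorem Bm_mulVec_zero : (Bm p).mulVec v 0 = -T (-1) * v 0 + v 1 := by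
  simp [Bm, Matrix.mulVec, dotProduct, Fin.sum_univ_three]

theorem Bm_mulVec_one : (Bm p).mulVec v 1 = v 1 := by
  simp [Bm, Matrix.mulVec, dotProduct, Fin.sum_univ_three]

theorem Bm_mulVec_two : (Bm p).mulVec v 2 = v 1 + -T 1 * v 2 := by
  simp [Bm, Matrix.mulVec, dotProduct, Fin.sum_univ_three]

variable {v}

theorem ordEq_Bm_mulVec_zero (h0 : ordEq (v 0) n) (h1 : ordGE (v 1) n) :
    ordEq ((Bm p).mulVec v 0) (n - 1) := by
  rw [Bm_mulVec_zero, neg_mul]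
  have h0' : ordEq (-(T (-1) * v 0)) (n - 1) := (h0.T_mul (-1)).neg
  exact h0'.add_of_ordGE (by rwa [sub_add_cancel])

theorem ordEq_Bm_mulVec_two (h1 : ordEq (v 1) n) (h2 : ordGE (v 2) n) :
    ordEq ((Bm p).mulVec v 2) n := by
  rw [Bm_mulVec_two, neg_mul]
  exact h1.add_of_ordGE (h2.T_mul 1).neg

theorem ordGE_Bm_mulVec_two (h1 : ordGE (v 1) n) (h2 : ordGE (v 2) n) :
    ordGE ((Bm p).mulVec v 2) n := by
  rw [Bm_mulVec_two, neg_mul]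
  exact h1.add ((h2.T_mul 1).neg.mono (by omega))

end Bm

theorem B_on_X2_general (p : ℕ)
    (v : Fin 3 → LaurentPolynomial (ZMod p)) (n : ℤ)
    (h0 : ordEq (v 0) n) (h1 : ordEq (v 1) n) (h2 : ordEq (v 2) n) :
    (ordEq ((Bm p).mulVec v 0) (n - 1) ∧ ordEq ((Bm p).mulVec v 1) n ∧
      ordEq ((Bm p).mulVec v 2) n) ∧
    (ordEq (((Bm p) * (Bm p)).mulVec v 0) (n - 2) ∧
      ordGE (((Bm p) * (Bm p)).mulVec v 1) n ∧
      ordGE (((Bm p) * (Bm p)).mulVec v 2) n) := by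
  have w0 : ordEq ((Bm p).mulVec v 0) (n - 1) := ordEq_Bm_mulVec_zero h0 h1.2
  have w1 : ordEq ((Bm p).mulVec v 1) n := by rwa [Bm_mulVec_one]
  have w2 : ordEq ((Bm p).mulVec v 2) n := ordEq_Bm_mulVec_two h1 h2.2
  rw [← Matrix.mulVec_mulVec]
  refine ⟨⟨w0, w1, w2⟩, ?_, ?_, ordGE_Bm_mulVec_two w1.2 w2.2⟩
  · rw [show n - 2 = n - 1 - 1 by ring]
    exact ordEq_Bm_mulVec_zero w0 (w1.2.mono (by omega))
  · rw [Bm_mulVec_one]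
    exact w1.2

/-- If all coordinates of v have the same finite lowest degree n (v ∈ X₂), then
Bv has lowest degrees (n-1, n, n); hence B²v lies in X₁. -/
theorem B_on_X2 (p : ℕ) [Fact (1 < p)]
    (v : Fin 3 → LaurentPolynomial (ZMod p)) (n : ℤ)
    (h0 : ordEq (v 0) n) (h1 : ordEq (v 1) n) (h2 : ordEq (v 2) n) :
    (ordEq ((Bm p).mulVec v 0) (n - 1) ∧ ordEq ((Bm p).mulVec v 1) n ∧
      ordEq ((Bm p).mulVec v 2) n) ∧
    (ordEq (((Bm p) * (Bm p)).mulVec v 0) (n - 2) ∧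
      ordGE (((Bm p) * (Bm p)).mulVec v 1) n ∧
      ordGE (((Bm p) * (Bm p)).mulVec v 2) n) :=
  B_on_X2_general p v n h0 h1 h2
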